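/- arXiv:2512.01004 — 5 statements merged into one kernel-verified Lean document; each statement's English description precedes it below -/
import Mathlib

section
/- Let g be an n-dimensional real Lie algebra with tr(ad_x) = 0 for all x ∈ g, and let ∂ denote the Koszul boundary operator on the exterior algebra of g. Then for X ∈ Λ^{k+1} g and Y ∈ Λ^{n-k} g one has ∂X ∧ Y = (-1)^{k+1} X ∧ ∂Y. -/
/-!
Splitting off the first factor of a wedge monomial gives `∂(x ∧ ξ) = θₓ ξ - x ∧ ∂ξ`, where `θₓ` is
the derivation of the exterior algebra extending `ad x`. Inducting on the degree of `X`, this moves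
`x` from `X` over to `Y`, at the cost of the term `θₓ ξ ∧ η + ξ ∧ θₓ η = θₓ (ξ ∧ η)` of degree
`≥ n`. On top-degree forms a derivation extending `f` acts by `tr f` (the infinitesimal version of
`Λⁿ f = det f`), so unimodularity makes this term vanish.
-/

open scoped BigOperators

/-- The wedge monomial `x₁ ∧ ⋯ ∧ x_m` associated to a list of vectors. -/
noncomputable def wedgeList {g : Type*} [AddCommGroup g] [Module ℝ g]
    (l : List g) : ExteriorAlgebra ℝ g :=
  (l.map fun x => ExteriorAlgebra.ι ℝ x).prod

open ExteriorAlgebra Module Function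

theorem LinearMap.eqOn_span₂ {R M N P : Type*} [CommSemiring R] [AddCommMonoid M] [Module R M]
    [AddCommMonoid N] [Module R N] [AddCommMonoid P] [Module R P] {s : Set M} {t : Set N}
    {B C : M →ₗ[R] N →ₗ[R] P} (h : ∀ x ∈ s, ∀ y ∈ t, B x y = C x y) {x : M} {y : N}
    (hx : x ∈ Submodule.span R s) (hy : y ∈ Submodule.span R t) : B x y = C x y :=
  LinearMap.eqOn_span (f := B.flip y) (g := C.flip y)
    (fun x' hx' => LinearMap.eqOn_span (fun y' hy' => h x' hx' y' hy') hy) hx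

namespace AlternatingMap

variable {R M N ι : Type*} [CommSemiring R] [AddCommMonoid M] [Module R M]
  [AddCommGroup N] [Module R N] [Fintype ι] [DecidableEq ι]

theorem sum_map_update_apply_eq_zero (ω : M [⋀^ι]→ₗ[R] N) (f : M →ₗ[R] M) {v : ι → M}
    {p q : ι} (hv : v p = v q) (hpq : p ≠ q) :
    ∑ j, ω (update v j (f (v j))) = 0 := by
  have h_other : ∀ j ∉ ({p, q} : Finset ι), ω (update v j (f (v j))) = 0 := fun j hj => by
    simp only [Finset.mem_insert, Finset.mem_singleton, not_or] at hj
    exact ω.map_eq_zero_of_eq _ (by simp [update_of_ne (Ne.symm hj.1),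
      update_of_ne (Ne.symm hj.2), hv]) hpq
  have h_swap : update v q (f (v q)) = update v p (f (v p)) ∘ Equiv.swap p q := by
    ext i
    rcases eq_or_ne i p with rfl | hip
    · simp [hpq, hpq.symm, hv]
    rcases eq_or_ne i q with rfl | hiq
    · simp [hv]
    · simp [Equiv.swap_apply_of_ne_of_ne hip hiq, hip, hiq]
  rw [← Finset.sum_subset (Finset.subset_univ {p, q}) fun j _ hj => h_other j hj,
    Finset.sum_pair hpq, h_swap, ω.map_swap _ hpq, add_neg_cancel]

theorem sum_compLinearMap_update_apply (ω : M [⋀^ι]→ₗ[R] N) (f : M →ₗ[R] M) (v : ι → M) :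
    (∑ j, ω.toMultilinearMap.compLinearMap (update (fun _ => LinearMap.id) j f)) v =
      ∑ j, ω (update v j (f (v j))) := by
  simp only [FunLike.coe_sum, Finset.sum_apply, MultilinearMap.compLinearMap_apply]
  refine Finset.sum_congr rfl fun j _ => congrArg ω (funext fun i => ?_)
  by_cases h : i = j
  · subst h; simp
  · simp [h]

/-- The derivative of `t ↦ ω.compLinearMap (1 + t • f)` at `t = 0`. -/
def derivCompLinearMap (ω : M [⋀^ι]→ₗ[R] N) (f : M →ₗ[R] M) : M [⋀^ι]→ₗ[R] N where
  toMultilinearMap := ∑ j, ω.toMultilinearMap.compLinearMap (update (fun _ => LinearMap.id) j f)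
  map_eq_zero_of_eq' v _ _ hv hpq := by
    rw [MultilinearMap.toFun_eq_coe, sum_compLinearMap_update_apply]
    exact sum_map_update_apply_eq_zero ω f hv hpq

theorem derivCompLinearMap_apply (ω : M [⋀^ι]→ₗ[R] N) (f : M →ₗ[R] M) (v : ι → M) :
    ω.derivCompLinearMap f v = ∑ j, ω (update v j (f (v j))) :=
  sum_compLinearMap_update_apply ω f v

theorem map_update_basis_comp (ω : M [⋀^ι]→ₗ[R] N) (b : Module.Basis ι R M) {σ : ι → ι}
    (hσ : σ.Injective) (j : ι) (x : M) :
    ω (update (fun i => b (σ i)) j x) = b.repr x (σ j) • ω (fun i => b (σ i)) := by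
  conv_lhs => rw [← b.sum_repr x]
  rw [ω.map_update_sum, Finset.sum_eq_single (σ j)]
  · rw [ω.map_update_smul, update_eq_self]
  · intro a _ ha
    obtain ⟨i, rfl⟩ := Finite.injective_iff_surjective.mp hσ a
    have hij : i ≠ j := by rintro rfl; exact ha rfl
    rw [ω.map_update_smul, ω.map_eq_zero_of_eq _ (by simp [update_of_ne hij]) hij, smul_zero]
  · simp

theorem derivCompLinearMap_eq_trace_smul (ω : M [⋀^ι]→ₗ[R] N) (f : M →ₗ[R] M)
    (b : Module.Basis ι R M) : ω.derivCompLinearMap f = LinearMap.trace R M f • ω := by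
  refine b.ext_alternating fun σ hσ => ?_
  rw [derivCompLinearMap_apply, smul_apply]
  simp_rw [map_update_basis_comp ω b hσ]
  rw [← Finset.sum_smul, LinearMap.trace_eq_matrix_trace R b, Matrix.trace]
  congr 1
  simp only [Matrix.diag, LinearMap.toMatrix_apply]
  exact (Finite.injective_iff_bijective.mp hσ).sum_comp fun i => b.repr (f (b i)) i

end AlternatingMap

section WedgeList

variable {g : Type*} [AddCommGroup g] [Module ℝ g]

@[simp]
theorem wedgeList_nil : wedgeList ([] : List g) = 1 := rfl

@[simp]
theorem wedgeList_cons (x : g) (l : List g) :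
    wedgeList (x :: l) = ι ℝ x * wedgeList l := by
  simp [wedgeList]

theorem wedgeList_append (l₁ l₂ : List g) :
    wedgeList (l₁ ++ l₂) = wedgeList l₁ * wedgeList l₂ := by
  simp [wedgeList]

theorem wedgeList_ofFn {m : ℕ} (v : Fin m → g) : wedgeList (List.ofFn v) = ιMulti ℝ m v := by
  rw [ιMulti_apply, wedgeList, List.map_ofFn]
  rfl

theorem wedgeList_eq_ιMulti (l : List g) : wedgeList l = ιMulti ℝ l.length l.get := by
  conv_lhs => rw [← List.ofFn_get l]
  exact wedgeList_ofFn _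

theorem wedgeList_set_eq_ιMulti_update (l : List g) (j : Fin l.length) (y : g) :
    wedgeList (l.set j y) = ιMulti ℝ l.length (update l.get j y) := by
  rw [← wedgeList_ofFn]
  congr 1
  refine List.ext_getElem (by simp) fun i _ _ => ?_
  simp only [List.getElem_set, List.getElem_ofFn, update_apply, Fin.ext_iff, eq_comm (a := i)]
  split_ifs <;> rfl

theorem wedgeList_eq_zero_of_finrank_lt_length [FiniteDimensional ℝ g] (l : List g)
    (hl : finrank ℝ g < l.length) : wedgeList l = 0 := by
  rw [wedgeList_eq_ιMulti]
  refine AlternatingMap.map_linearDependent _ _ fun hli => ?_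
  simpa using (hli.fintype_card_le_finrank.trans_lt hl).ne

theorem ι_mul_ι_mul (x y : g) (w : ExteriorAlgebra ℝ g) :
    ι ℝ x * (ι ℝ y * w) = -(ι ℝ y * (ι ℝ x * w)) := by
  rw [← mul_assoc, ← mul_assoc, ← neg_mul, neg_eq_of_add_eq_zero_left (ι_add_mul_swap x y)]

theorem ι_mul_wedgeList (x : g) (l : List g) :
    ι ℝ x * wedgeList l = (-1 : ℝ) ^ l.length • (wedgeList l * ι ℝ x) := by
  induction l with
  | nil => simp
  | cons a l ih =>
    rw [wedgeList_cons, ι_mul_ι_mul, ih, mul_smul_comm, List.length_cons, pow_succ, mul_neg_one,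
      neg_smul, mul_assoc]

theorem wedgeList_set (l : List g) (j : ℕ) (hj : j < l.length) (y : g) :
    wedgeList (l.set j y) = (-1 : ℝ) ^ j • wedgeList (y :: l.eraseIdx j) := by
  induction l generalizing j with
  | nil => simp at hj
  | cons a l ih =>
    cases j with
    | zero => simp
    | succ j =>
      rw [List.set_cons_succ, List.eraseIdx_cons_succ, wedgeList_cons,
        ih j (Nat.lt_of_succ_lt_succ hj), wedgeList_cons, wedgeList_cons, wedgeList_cons,
        mul_smul_comm, ι_mul_ι_mul, pow_succ, mul_neg_one, neg_smul, smul_neg]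

end WedgeList

section WedgeListDeriv

variable {g : Type*} [AddCommGroup g] [Module ℝ g]

/-- The derivation of `ExteriorAlgebra ℝ g` extending `f`, evaluated on a wedge monomial. -/
noncomputable def wedgeListDeriv (f : g →ₗ[ℝ] g) (l : List g) : ExteriorAlgebra ℝ g :=
  ∑ j : Fin l.length, wedgeList (l.set j (f l[j]))

@[simp]
theorem wedgeListDeriv_nil (f : g →ₗ[ℝ] g) : wedgeListDeriv f [] = 0 := by
  simp [wedgeListDeriv]

theorem wedgeListDeriv_cons (f : g →ₗ[ℝ] g) (x : g) (l : List g) :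
    wedgeListDeriv f (x :: l) = ι ℝ (f x) * wedgeList l + ι ℝ x * wedgeListDeriv f l := by
  simp [wedgeListDeriv, Fin.sum_univ_succ, Finset.mul_sum]

theorem wedgeListDeriv_append (f : g →ₗ[ℝ] g) (l₁ l₂ : List g) :
    wedgeListDeriv f (l₁ ++ l₂) =
      wedgeListDeriv f l₁ * wedgeList l₂ + wedgeList l₁ * wedgeListDeriv f l₂ := by
  induction l₁ with
  | nil => simp
  | cons x l₁ ih =>
    rw [List.cons_append, wedgeListDeriv_cons, ih, wedgeListDeriv_cons, wedgeList_cons,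
      wedgeList_append]
    noncomm_ring

theorem wedgeListDeriv_eq_derivCompLinearMap (f : g →ₗ[ℝ] g) (l : List g) :
    wedgeListDeriv f l = (ιMulti ℝ l.length).derivCompLinearMap f l.get := by
  simp only [wedgeListDeriv, AlternatingMap.derivCompLinearMap_apply,
    wedgeList_set_eq_ιMulti_update, List.get_eq_getElem, Fin.getElem_fin]

theorem wedgeListDeriv_eq_trace_smul [FiniteDimensional ℝ g] (f : g →ₗ[ℝ] g) (l : List g)
    (hl : finrank ℝ g ≤ l.length) :
    wedgeListDeriv f l = LinearMap.trace ℝ g f • wedgeList l := by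
  rcases hl.eq_or_lt with hl | hl
  · rw [wedgeListDeriv_eq_derivCompLinearMap, AlternatingMap.derivCompLinearMap_eq_trace_smul _ _
      (finBasisOfFinrankEq ℝ g hl), wedgeList_eq_ιMulti, AlternatingMap.smul_apply]
  · rw [wedgeList_eq_zero_of_finrank_lt_length l hl, smul_zero]
    exact Finset.sum_eq_zero fun j _ =>
      wedgeList_eq_zero_of_finrank_lt_length _ (by rwa [List.length_set])

end WedgeListDeriv

section Koszul

variable {g : Type*} [LieRing g] [LieAlgebra ℝ g]

def IsKoszulBoundary (bd : ExteriorAlgebra ℝ g →ₗ[ℝ] ExteriorAlgebra ℝ g) : Prop :=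
  ∀ l : List g,
    bd (wedgeList l) =
      ∑ i : Fin l.length, ∑ j : Fin l.length,
        if (i : ℕ) < (j : ℕ) then
          ((-1 : ℝ)) ^ ((i : ℕ) + (j : ℕ) + 1) •
            wedgeList (⁅l.get i, l.get j⁆ :: (l.eraseIdx j).eraseIdx i)
        else 0

namespace IsKoszulBoundary

variable {bd : ExteriorAlgebra ℝ g →ₗ[ℝ] ExteriorAlgebra ℝ g} (hbd : IsKoszulBoundary bd)
include hbd

theorem map_wedgeList_nil : bd (wedgeList ([] : List g)) = 0 := by
  simpa using hbd []

theorem ι_mul_map_wedgeList (x : g) (l : List g) :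
    ι ℝ x * bd (wedgeList l) = (-1 : ℝ) ^ (l.length + 1) • (bd (wedgeList l) * ι ℝ x) := by
  simp only [hbd l, Finset.mul_sum, Finset.sum_mul, Finset.smul_sum]
  refine Finset.sum_congr rfl fun i _ => Finset.sum_congr rfl fun j _ => ?_
  split_ifs with hij
  · have hlen : (⁅l.get i, l.get j⁆ :: (l.eraseIdx j).eraseIdx i).length + 2 = l.length + 1 := by
      simp only [List.length_cons, List.length_eraseIdx, Fin.is_lt, if_true]
      split_ifs <;> omega
    rw [mul_smul_comm, ι_mul_wedgeList, smul_mul_assoc, smul_smul, smul_smul, ← hlen]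
    congr 1
    ring
  · simp

theorem map_wedgeList_cons (x : g) (l : List g) :
    bd (wedgeList (x :: l)) =
      wedgeListDeriv (LieAlgebra.ad ℝ g x) l - ι ℝ x * bd (wedgeList l) := by
  have h_first_row : ∑ j : Fin l.length,
      (-1 : ℝ) ^ ((j : ℕ) + 1 + 1) • wedgeList (⁅x, l[(j : ℕ)]⁆ :: l.eraseIdx j) =
        wedgeListDeriv (LieAlgebra.ad ℝ g x) l := by
    refine Finset.sum_congr rfl fun j _ => ?_
    simp [wedgeList_set l j j.isLt, pow_succ]
  have h_other_rows : ∑ i : Fin l.length, ∑ j : Fin l.length,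
      (if (i : ℕ) < (j : ℕ) then
        (-1 : ℝ) ^ ((i : ℕ) + 1 + ((j : ℕ) + 1) + 1) •
          wedgeList (⁅l[(i : ℕ)], l[(j : ℕ)]⁆ :: x :: (l.eraseIdx j).eraseIdx i)
      else 0) = -(ι ℝ x * bd (wedgeList l)) := by
    simp only [hbd l, Finset.mul_sum, ← Finset.sum_neg_distrib]
    refine Finset.sum_congr rfl fun i _ => Finset.sum_congr rfl fun j _ => ?_
    split_ifs
    · rw [wedgeList_cons, wedgeList_cons, ι_mul_ι_mul, wedgeList_cons, mul_smul_comm, ← smul_neg,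
        show (i : ℕ) + 1 + ((j : ℕ) + 1) + 1 = (i : ℕ) + (j : ℕ) + 1 + 2 by omega, pow_add]
      simp
    · simp
  rw [hbd]
  simp only [List.length_cons, Fin.sum_univ_succ, Fin.val_zero, Fin.val_succ, List.get_eq_getElem,
    List.getElem_cons_zero, List.getElem_cons_succ, List.eraseIdx_cons_succ,
    List.eraseIdx_cons_zero, if_false, Nat.not_lt_zero, Nat.succ_pos, if_true,
    Nat.add_lt_add_iff_right, zero_add]
  rw [h_first_row, h_other_rows, sub_eq_add_neg]

theorem map_wedgeList_mul_wedgeList [FiniteDimensional ℝ g]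
    (htr : ∀ x : g, LinearMap.trace ℝ g (LieAlgebra.ad ℝ g x) = 0) (lx ly : List g)
    (hlen : finrank ℝ g < lx.length + ly.length) :
    bd (wedgeList lx) * wedgeList ly =
      (-1 : ℝ) ^ lx.length • (wedgeList lx * bd (wedgeList ly)) := by
  induction lx generalizing ly with
  | nil =>
    rw [List.length_nil, zero_add] at hlen
    rw [hbd.map_wedgeList_nil, wedgeList_eq_zero_of_finrank_lt_length ly hlen, map_zero, zero_mul,
      mul_zero, smul_zero]
  | cons x l ih =>
    have ih' := ih (x :: ly) (by simp only [List.length_cons] at hlen ⊢; omega)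
    set ε : ℝ := (-1) ^ l.length
    have hε : ε * ε = 1 := by rw [← pow_add, ← two_mul, pow_mul]; norm_num
    have h_deriv : wedgeListDeriv (LieAlgebra.ad ℝ g x) l * wedgeList ly +
        wedgeList l * wedgeListDeriv (LieAlgebra.ad ℝ g x) ly = 0 := by
      rw [← wedgeListDeriv_append, wedgeListDeriv_eq_trace_smul _ _
        (by simp only [List.length_append, List.length_cons] at hlen ⊢; omega), htr, zero_smul]
    rw [hbd.map_wedgeList_cons, wedgeList_cons] at ih'
    calc bd (wedgeList (x :: l)) * wedgeList ly
        = wedgeListDeriv (LieAlgebra.ad ℝ g x) l * wedgeList ly -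
            ι ℝ x * (bd (wedgeList l) * wedgeList ly) := by
          rw [hbd.map_wedgeList_cons, sub_mul, mul_assoc]
      _ = wedgeListDeriv (LieAlgebra.ad ℝ g x) l * wedgeList ly +
            wedgeList l * wedgeListDeriv (LieAlgebra.ad ℝ g x) ly -
            wedgeList l * ι ℝ x * bd (wedgeList ly) := by
          rw [← mul_assoc, hbd.ι_mul_map_wedgeList, smul_mul_assoc, mul_assoc, ih', smul_smul,
            pow_succ, mul_neg_one, neg_mul, hε, neg_smul, one_smul]
          noncomm_ring
      _ = (-1 : ℝ) ^ (x :: l).length • (wedgeList (x :: l) * bd (wedgeList ly)) := by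
          rw [h_deriv, wedgeList_cons, ι_mul_wedgeList, List.length_cons, pow_succ, smul_mul_assoc,
            smul_smul, mul_neg_one, neg_mul, hε, neg_smul, one_smul, zero_sub]

end IsKoszulBoundary

end Koszul

theorem koszul_wedge_top_degree
    {g : Type*} [LieRing g] [LieAlgebra ℝ g] [FiniteDimensional ℝ g]
    {n : ℕ} (hn : Module.finrank ℝ g = n)
    (htr : ∀ x : g, LinearMap.trace ℝ g (LieAlgebra.ad ℝ g x) = 0)
    (bd : ExteriorAlgebra ℝ g →ₗ[ℝ] ExteriorAlgebra ℝ g)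
    (hKoszul : ∀ l : List g,
      bd (wedgeList l) =
        ∑ i : Fin l.length, ∑ j : Fin l.length,
          if (i : ℕ) < (j : ℕ) then
            ((-1 : ℝ)) ^ ((i : ℕ) + (j : ℕ) + 1) •
              wedgeList (⁅l.get i, l.get j⁆ :: (l.eraseIdx j).eraseIdx i)
          else 0)
    (k : ℕ) (X Y : ExteriorAlgebra ℝ g)
    (hX : X ∈ ⋀[ℝ]^(k+1) g) (hY : Y ∈ ⋀[ℝ]^(n-k) g) :
    bd X * Y = ((-1 : ℝ)) ^ (k + 1) • (X * bd Y) := by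
  subst hn
  rw [← ιMulti_span_fixedDegree] at hX hY
  have h_monomial : ∀ X ∈ Set.range (ιMulti ℝ (k + 1)),
      ∀ Y ∈ Set.range (ιMulti ℝ (finrank ℝ g - k)), bd X * Y = (-1 : ℝ) ^ (k + 1) • (X * bd Y) := by
    rintro _ ⟨v, rfl⟩ _ ⟨w, rfl⟩
    have h := IsKoszulBoundary.map_wedgeList_mul_wedgeList hKoszul htr (List.ofFn v) (List.ofFn w)
      (by simp only [List.length_ofFn]; omega)
    rwa [wedgeList_ofFn, wedgeList_ofFn, List.length_ofFn] at h
  exact LinearMap.eqOn_span₂ (B := LinearMap.mul ℝ _ ∘ₗ bd)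
    (C := (-1 : ℝ) ^ (k + 1) • (LinearMap.mul ℝ _).compl₂ bd) h_monomial hX hY
end

section
/- Let G be a real Lie group acting linearly on a finite-dimensional real vector space V. If v ∈ V is non-zero and 0 is a limit point of the orbit Gv, then the orbit Gv is unbounded. -/
/-!
The vectors with bounded orbit form a `G`-invariant subspace `B`. On the finite-dimensional,
hence complete, space `B` the operators `ρ g` are pointwise bounded, so by Banach–Steinhaus
they are uniformly bounded: `‖ρ g w‖ ≤ C ‖w‖` for `w ∈ B`. If `v` had bounded orbit, then
`v = ρ gⱼ⁻¹ (ρ gⱼ v)` would give `‖v‖ ≤ C ‖ρ gⱼ v‖ → 0`.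
-/

open Filter
open scoped Topology

namespace Representation

variable {𝕜 G V : Type*} [NontriviallyNormedField 𝕜] [NormedAddCommGroup V] [NormedSpace 𝕜 V]

section Monoid

variable [Monoid G] (ρ : Representation 𝕜 G V)

def boundedOrbits : Submodule 𝕜 V where
  carrier := {w | Bornology.IsBounded (Set.range fun g => ρ g w)}
  zero_mem' := by simp
  add_mem' {x y} hx hy :=
    (hx.add hy).subset <| Set.range_subset_iff.2 fun g => by
      simpa only [map_add] using Set.add_mem_add (Set.mem_range_self g) (Set.mem_range_self g)
  smul_mem' c x hx :=
    (hx.smul₀ c).subset <| Set.range_subset_iff.2 fun g => by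
      simpa only [map_smul] using Set.smul_mem_smul_set (a := c) (Set.mem_range_self g)

variable {ρ}

theorem mem_boundedOrbits {w : V} :
    w ∈ ρ.boundedOrbits ↔ Bornology.IsBounded (Set.range fun g => ρ g w) :=
  Iff.rfl

theorem apply_mem_boundedOrbits (h : G) {w : V} (hw : w ∈ ρ.boundedOrbits) :
    ρ h w ∈ ρ.boundedOrbits :=
  hw.subset <| Set.range_subset_iff.2 fun g =>
    ⟨g * h, by simp only [map_mul, Module.End.mul_apply]⟩

variable [CompleteSpace 𝕜] [FiniteDimensional 𝕜 V]

theorem exists_norm_apply_le_of_mem_boundedOrbits :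
    ∃ C, ∀ g, ∀ w ∈ ρ.boundedOrbits, ‖ρ g w‖ ≤ C * ‖w‖ := by
  let T : G → (ρ.boundedOrbits →L[𝕜] V) := fun g =>
    LinearMap.toContinuousLinearMap ((ρ g).comp ρ.boundedOrbits.subtype)
  have : CompleteSpace ρ.boundedOrbits := FiniteDimensional.complete 𝕜 _
  obtain ⟨C, hC⟩ := banach_steinhaus (g := T) fun w => by
    obtain ⟨C, hC⟩ := isBounded_iff_forall_norm_le.1 w.2
    exact ⟨C, fun g => hC _ (Set.mem_range_self g)⟩
  exact ⟨C, fun g w hw => (T g).le_of_opNorm_le (hC g) ⟨w, hw⟩⟩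

end Monoid

theorem exists_norm_le_mul_norm_apply_of_mem_boundedOrbits [Group G] [CompleteSpace 𝕜]
    [FiniteDimensional 𝕜 V] {ρ : Representation 𝕜 G V} {v : V} (hv : v ∈ ρ.boundedOrbits) :
    ∃ C, ∀ g, ‖v‖ ≤ C * ‖ρ g v‖ := by
  obtain ⟨C, hC⟩ := exists_norm_apply_le_of_mem_boundedOrbits (ρ := ρ)
  refine ⟨C, fun g => ?_⟩
  calc ‖v‖ = ‖ρ g⁻¹ (ρ g v)‖ := by rw [inv_self_apply]
    _ ≤ C * ‖ρ g v‖ := hC _ _ (apply_mem_boundedOrbits g hv)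

end Representation

theorem orbit_unbounded_of_zero_limit_point_general
    {G : Type*} [Group G]
    {V : Type*} [NormedAddCommGroup V] [NormedSpace ℝ V] [FiniteDimensional ℝ V]
    (ρ : Representation ℝ G V)
    (v : V) (hv : v ≠ 0)
    (hlim : ∃ u : ℕ → G, Tendsto (fun j => ρ (u j) v) atTop (𝓝 (0 : V))) :
    ¬ Bornology.IsBounded (Set.range fun h : G => ρ h v) := by
  intro hbdd
  obtain ⟨u, hu⟩ := hlim
  obtain ⟨C, hC⟩ := Representation.exists_norm_le_mul_norm_apply_of_mem_boundedOrbits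
    (Representation.mem_boundedOrbits.2 hbdd)
  have h_bound_tendsto : Tendsto (fun j => C * ‖ρ (u j) v‖) atTop (𝓝 0) := by
    simpa using hu.norm.const_mul C
  exact hv <| norm_le_zero_iff.1 <| ge_of_tendsto h_bound_tendsto <| .of_forall fun j => hC (u j)

theorem orbit_unbounded_of_zero_limit_point
    {G : Type*} [Group G] [TopologicalSpace G] [IsTopologicalGroup G]
    {V : Type*} [NormedAddCommGroup V] [NormedSpace ℝ V] [FiniteDimensional ℝ V]
    (ρ : Representation ℝ G V)
    (hcont : Continuous fun p : G × V => ρ p.1 p.2)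
    (v : V) (hv : v ≠ 0)
    (hlim : ∃ u : ℕ → G, Tendsto (fun j => ρ (u j) v) atTop (𝓝 (0 : V))) :
    ¬ Bornology.IsBounded (Set.range fun h : G => ρ h v) :=
  orbit_unbounded_of_zero_limit_point_general ρ v hv hlim
end

section
/- Let G be a group acting linearly on a finite-dimensional real vector space V, and suppose K ⊆ V is a G-invariant, centrally symmetric, compact convex set of maximal dimension among all such sets. If dim(span K) = dim V, then V admits a G-invariant inner product. -/
/-!
Because `K` is a neighbourhood of `0` (it is a symmetric convex body spanning `V`) and is bounded,
the operators `ρ g`, which map `K` onto itself, have uniformly bounded norms. Hence the closure of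
`ρ(G)` in `GL(V)` is a compact group, and averaging a Euclidean inner product over its Haar measure
yields an inner product invariant under `G`.
-/

open MeasureTheory Topology Metric Set
open scoped InnerProductSpace

section OperatorBound

variable {𝕜 E F : Type*} [NontriviallyNormedField 𝕜] [NormedAddCommGroup E] [NormedSpace 𝕜 E]
  [NormedAddCommGroup F] [NormedSpace 𝕜 F]

theorem ContinuousLinearMap.exists_opNorm_le_of_mapsTo {s : Set E} {t : Set F} (hs : s ∈ 𝓝 0)
    (ht : Bornology.IsBounded t) : ∃ C, ∀ f : E →L[𝕜] F, MapsTo f s t → ‖f‖ ≤ C := by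
  obtain ⟨ε, hε, hball⟩ := Metric.mem_nhds_iff.mp hs
  obtain ⟨R, hR, hRt⟩ := ht.exists_pos_norm_le
  obtain ⟨c, hc⟩ := NormedField.exists_one_lt_norm 𝕜
  refine ⟨R * ‖c‖ / ε, fun f hf => f.opNorm_le_of_shell hε (by positivity) hc fun x hx hxε => ?_⟩
  have hc0 : 0 < ‖c‖ := one_pos.trans hc
  calc ‖f x‖ ≤ R := hRt _ (hf (hball (mem_ball_zero_iff.mpr hxε)))
    _ = R * ‖c‖ / ε * (ε / ‖c‖) := by field_simp
    _ ≤ R * ‖c‖ / ε * ‖x‖ := by gcongr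

end OperatorBound

section SymmetricConvex

variable {V : Type*} [NormedAddCommGroup V] [NormedSpace ℝ V]

theorem Convex.zero_mem_of_neg_eq {s : Set V} (hs : Convex ℝ s) (hneg : -s = s)
    (hne : s.Nonempty) : (0 : V) ∈ s :=
  ((balanced_iff_neg_mem hs).2 fun _ hx => hneg ▸ neg_mem_neg.2 hx).zero_mem hne

theorem Convex.mem_nhds_zero_of_neg_eq [FiniteDimensional ℝ V] {s : Set V} (hs : Convex ℝ s)
    (hneg : -s = s) (hne : s.Nonempty) (hspan : Submodule.span ℝ s = ⊤) : s ∈ 𝓝 0 := by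
  have h0 : (0 : V) ∈ s := hs.zero_mem_of_neg_eq hneg hne
  have haff : affineSpan ℝ s = ⊤ := by
    rw [AffineSubspace.affineSpan_eq_top_iff_vectorSpan_eq_top_of_nonempty ℝ V V hne,
      vectorSpan_eq_span_vsub_set_right ℝ h0]
    simpa using hspan
  have hint_neg : -interior s = interior s := by
    rw [← image_neg_eq_neg, ← Homeomorph.coe_neg, Homeomorph.image_interior, Homeomorph.coe_neg,
      image_neg_eq_neg, hneg]
  exact mem_interior_iff_mem_nhds.1 <| hs.interior.zero_mem_of_neg_eq hint_neg
    (hs.interior_nonempty_iff_affineSpan_eq_top.2 haff)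

end SymmetricConvex

theorem Subgroup.isCompact_topologicalClosure_of_isBounded {R : Type*} [NormedRing R]
    [ProperSpace R] {Γ : Subgroup Rˣ} (hΓ : Bornology.IsBounded (Γ.ofUnits : Set R)) :
    IsCompact (Γ.topologicalClosure : Set Rˣ) := by
  set S := Γ.ofUnits.topologicalClosure
  have hS : IsCompact (S : Set R) := isCompact_of_isClosed_isBounded isClosed_closure hΓ.closure
  have hΓS : Γ ≤ S.units := (ofUnits_le_iff_le_units _ _).1 Γ.ofUnits.le_topologicalClosure
  have hSu := Submonoid.units_isCompact hS
  exact hSu.of_isClosed_subset isClosed_closure (Γ.topologicalClosure_minimal hΓS hSu.isClosed)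

section Averaging

variable {H : Type*} [Group H] [TopologicalSpace H] [IsTopologicalGroup H]
  {V : Type*} [NormedAddCommGroup V] [NormedSpace ℝ V] (π : H →ₜ* (V →L[ℝ] V)ˣ)

theorem ContinuousMonoidHom.continuous_val_map_inv : Continuous fun h => (π h⁻¹ : V →L[ℝ] V) :=
  Units.continuous_val.comp (π.continuous.comp continuous_inv)

variable [CompactSpace H] [MeasurableSpace H] [BorelSpace H] (μ : Measure H) [IsFiniteMeasure μ]
  {E : Type*} [NormedAddCommGroup E] [InnerProductSpace ℝ E] (L : V →L[ℝ] E)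

theorem integrable_inner_map_inv (v w : V) :
    Integrable (fun h => ⟪L ((π h⁻¹ : V →L[ℝ] V) v), L ((π h⁻¹ : V →L[ℝ] V) w)⟫_ℝ) μ :=
  have := π.continuous_val_map_inv
  Continuous.integrable_of_hasCompactSupport (by fun_prop) (.of_compactSpace _)

noncomputable def averagedInner : V →ₗ[ℝ] V →ₗ[ℝ] ℝ :=
  LinearMap.mk₂ ℝ (fun v w => ∫ h, ⟪L ((π h⁻¹ : V →L[ℝ] V) v), L ((π h⁻¹ : V →L[ℝ] V) w)⟫_ℝ ∂μ)
    (fun _ _ _ => by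
      simp only [map_add, inner_add_left]
      exact integral_add (integrable_inner_map_inv π μ L _ _) (integrable_inner_map_inv π μ L _ _))
    (fun c _ _ => by simp only [map_smul, real_inner_smul_left]; exact integral_const_mul c _)
    (fun _ _ _ => by
      simp only [map_add, inner_add_right]
      exact integral_add (integrable_inner_map_inv π μ L _ _) (integrable_inner_map_inv π μ L _ _))
    (fun c _ _ => by simp only [map_smul, real_inner_smul_right]; exact integral_const_mul c _)

theorem averagedInner_apply (v w : V) :
    averagedInner π μ L v w = ∫ h, ⟪L ((π h⁻¹ : V →L[ℝ] V) v), L ((π h⁻¹ : V →L[ℝ] V) w)⟫_ℝ ∂μ :=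
  rfl

theorem averagedInner_comm (v w : V) : averagedInner π μ L v w = averagedInner π μ L w v := by
  simp only [averagedInner_apply, real_inner_comm]

theorem averagedInner_self_pos [μ.IsOpenPosMeasure] (hL : Function.Injective L) {v : V}
    (hv : v ≠ 0) : 0 < averagedInner π μ L v v := by
  have := π.continuous_val_map_inv
  refine Continuous.integral_pos_of_hasCompactSupport_nonneg_nonzero (x := 1) (by fun_prop)
    (.of_compactSpace _) (fun _ => real_inner_self_nonneg) ?_
  simpa using hL.ne hv

theorem averagedInner_map [μ.IsMulLeftInvariant] (g : H) (v w : V) :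
    averagedInner π μ L ((π g : V →L[ℝ] V) v) ((π g : V →L[ℝ] V) w) = averagedInner π μ L v w := by
  have hsubst (h : H) (u : V) :
      (π (g⁻¹ * h)⁻¹ : V →L[ℝ] V) u = (π h⁻¹ : V →L[ℝ] V) ((π g : V →L[ℝ] V) u) := by
    simp
  simp only [averagedInner_apply, ← hsubst]
  exact integral_mul_left_eq_self
    (fun h => ⟪L ((π h⁻¹ : V →L[ℝ] V) v), L ((π h⁻¹ : V →L[ℝ] V) w)⟫_ℝ) g⁻¹

end Averaging

theorem exists_invariant_inner_of_compactSpace {H : Type*} [Group H] [TopologicalSpace H]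
    [IsTopologicalGroup H] [CompactSpace H] {V : Type*} [NormedAddCommGroup V] [NormedSpace ℝ V]
    [FiniteDimensional ℝ V] (π : H →ₜ* (V →L[ℝ] V)ˣ) :
    ∃ B : V →ₗ[ℝ] V →ₗ[ℝ] ℝ, (∀ v w, B v w = B w v) ∧ (∀ v, v ≠ 0 → 0 < B v v) ∧
      ∀ h v w, B ((π h : V →L[ℝ] V) v) ((π h : V →L[ℝ] V) w) = B v w := by
  borelize H
  let e : V ≃L[ℝ] EuclideanSpace ℝ (Fin (Module.finrank ℝ V)) :=
    .ofFinrankEq finrank_euclideanSpace_fin.symm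
  exact ⟨averagedInner π Measure.haar e.toContinuousLinearMap, averagedInner_comm _ _ _,
    fun _ => averagedInner_self_pos _ _ _ e.injective, averagedInner_map _ _ _⟩

noncomputable def Representation.asContinuousLinearGroupHom {𝕜 G V : Type*}
    [NontriviallyNormedField 𝕜] [CompleteSpace 𝕜] [Group G] [NormedAddCommGroup V]
    [NormedSpace 𝕜 V] [FiniteDimensional 𝕜 V] (ρ : Representation 𝕜 G V) : G →* (V →L[𝕜] V)ˣ :=
  (Units.map (Module.End.toContinuousLinearMap V).toMonoidHom).comp ρ.asGroupHom

theorem invariant_inner_product_of_full_dimensional_invariant_body_general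
    {G : Type*} [Group G]
    {V : Type*} [NormedAddCommGroup V] [NormedSpace ℝ V] [FiniteDimensional ℝ V]
    (ρ : Representation ℝ G V)
    (K : Set V)
    (hKconv : Convex ℝ K) (hKcpt : IsCompact K) (hKsymm : K = -K)
    (hKinv : ∀ h : G, (fun v => ρ h v) '' K = K)
    (hKfull : Submodule.span ℝ K = ⊤) :
    ∃ B : V →ₗ[ℝ] V →ₗ[ℝ] ℝ,
      (∀ v w : V, B v w = B w v) ∧
      (∀ v : V, v ≠ 0 → 0 < B v v) ∧
      (∀ (h : G) (v w : V), B (ρ h v) (ρ h w) = B v w) := by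
  rcases K.eq_empty_or_nonempty with rfl | hKne
  · rw [Submodule.span_empty, subsingleton_iff_bot_eq_top, Submodule.subsingleton_iff] at hKfull
    exact ⟨0, fun _ _ => rfl, fun v hv => absurd (Subsingleton.elim v 0) hv, fun _ _ _ => rfl⟩
  let π := ρ.asContinuousLinearGroupHom
  obtain ⟨C, hC⟩ := ContinuousLinearMap.exists_opNorm_le_of_mapsTo (𝕜 := ℝ)
    (hKconv.mem_nhds_zero_of_neg_eq hKsymm.symm hKne hKfull) hKcpt.isBounded
  have hbdd : Bornology.IsBounded (π.range.ofUnits : Set (V →L[ℝ] V)) := by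
    refine isBounded_iff_forall_norm_le.2 ⟨C, ?_⟩
    rintro _ ⟨_, ⟨g, rfl⟩, rfl⟩
    exact hC _ (mapsTo_iff_image_subset.2 (hKinv g).subset)
  let Γ := π.range.topologicalClosure
  have : CompactSpace Γ :=
    isCompact_iff_compactSpace.1 (Subgroup.isCompact_topologicalClosure_of_isBounded hbdd)
  obtain ⟨B, hBsymm, hBpos, hBinv⟩ :=
    exists_invariant_inner_of_compactSpace ⟨Γ.subtype, continuous_subtype_val⟩
  exact ⟨B, hBsymm, hBpos, fun g =>
    hBinv ⟨π g, π.range.le_topologicalClosure (MonoidHom.mem_range.2 ⟨g, rfl⟩)⟩⟩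

theorem invariant_inner_product_of_full_dimensional_invariant_body
    {G : Type*} [Group G]
    {V : Type*} [NormedAddCommGroup V] [NormedSpace ℝ V] [FiniteDimensional ℝ V]
    (ρ : Representation ℝ G V)
    (K : Set V)
    (hKconv : Convex ℝ K) (hKcpt : IsCompact K) (hKsymm : K = -K)
    (hKinv : ∀ h : G, (fun v => ρ h v) '' K = K)
    (hKmax : ∀ K' : Set V, Convex ℝ K' → IsCompact K' → K' = -K' →
      (∀ h : G, (fun v => ρ h v) '' K' = K') →
      Module.finrank ℝ (Submodule.span ℝ K') ≤ Module.finrank ℝ (Submodule.span ℝ K))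
    (hKfull : Submodule.span ℝ K = ⊤) :
    ∃ B : V →ₗ[ℝ] V →ₗ[ℝ] ℝ,
      (∀ v w : V, B v w = B w v) ∧
      (∀ v : V, v ≠ 0 → 0 < B v v) ∧
      (∀ (h : G) (v w : V), B (ρ h v) (ρ h w) = B v w) :=
  invariant_inner_product_of_full_dimensional_invariant_body_general ρ K hKconv hKcpt hKsymm hKinv
    hKfull
end

section
/- Let G be a connected real Lie group with Lie algebra g. Then there exists an open dense set U ⊆ g such that for every v ∈ U, the closure of the adjoint orbit Ad_G(v) does not contain 0. -/
/-!
If some `ad x` is not nilpotent, a coefficient of the characteristic polynomial of `ad v` that is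
nonzero at `x` is a continuous `Ad`-invariant polynomial function vanishing at `0`: its
nonvanishing set is open and dense, and the orbit closure of a point `v` of it lies in the level
set through `v`, away from `0`. Otherwise `g` is nilpotent by Engel's theorem, hence `[g, g] ≠ g`,
and a nonzero linear functional `ℓ` vanishing on `[g, g]` plays the same role: along
`s ↦ Ad (exp (s • x)) v` the derivative of `ℓ` is `ℓ` of a bracket, hence zero, so `ℓ` is invariant
under `exp g`, and thus under the group it generates.
-/

open scoped Topology
open Filter Polynomial

theorem MvPolynomial.dense_setOf_eval_ne_zero {ι : Type*} [Fintype ι] {P : MvPolynomial ι ℝ}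
    (hP : P ≠ 0) : Dense {c : ι → ℝ | eval c P ≠ 0} := by
  refine dense_iff_inter_open.2 fun V hV ⟨c, hc⟩ => ?_
  by_contra hV_zero
  obtain ⟨r, hr, hball⟩ := Metric.isOpen_iff.1 hV c hc
  refine hP (funext_set (fun i => Metric.ball (c i) r) (fun i => ?_) fun x hx => ?_)
  · rw [Real.ball_eq_Ioo]
    exact Set.Ioo_infinite (by linarith)
  · rw [← ball_pi c hr] at hx
    by_contra hne
    exact hV_zero ⟨x, hball hx, by simpa using hne⟩

theorem LinearMap.dense_setOf_ne_zero {𝕜 E : Type*} [NontriviallyNormedField 𝕜] [AddCommGroup E]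
    [Module 𝕜 E] [TopologicalSpace E] [IsTopologicalAddGroup E] [ContinuousSMul 𝕜 E]
    {ℓ : E →ₗ[𝕜] 𝕜} (hℓ : ℓ ≠ 0) : Dense {v | ℓ v ≠ 0} := by
  change Dense (ker ℓ : Set E)ᶜ
  rw [← interior_eq_empty_iff_dense_compl]
  by_contra h
  exact hℓ (ker_eq_top.1 ((ker ℓ).eq_top_of_nonempty_interior' (Set.nonempty_iff_ne_empty.2 h)))

theorem LinearMap.exists_charpoly_coeff_ne_zero_of_not_isNilpotent {K M : Type*} [Field K]
    [AddCommGroup M] [Module K M] [FiniteDimensional K M] {f : Module.End K M}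
    (hf : ¬IsNilpotent f) : ∃ j < Module.finrank K M, f.charpoly.coeff j ≠ 0 := by
  contrapose! hf
  rw [isNilpotent_iff_charpoly]
  ext j
  rw [coeff_X_pow]
  rcases lt_trichotomy j (Module.finrank K M) with hj | rfl | hj
  · simp [hf j hj, hj.ne]
  · simpa [charpoly_natDegree] using (charpoly_monic f).coeff_natDegree
  · rw [if_neg hj.ne', coeff_eq_zero_of_natDegree_lt (by rwa [charpoly_natDegree])]

section CharpolyCoeff

variable {E F : Type*} [AddCommGroup E] [Module ℝ E] [FiniteDimensional ℝ E]
  [TopologicalSpace E] [IsTopologicalAddGroup E] [ContinuousSMul ℝ E] [T2Space E]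
  [AddCommGroup F] [Module ℝ F] [FiniteDimensional ℝ F]

theorem LinearMap.charpoly_coeff_eq_eval_polyCharpoly (φ : E →ₗ[ℝ] Module.End ℝ F) (j : ℕ)
    (v : E) : (φ v).charpoly.coeff j = MvPolynomial.eval
      ((Module.finBasis ℝ E).equivFun.toContinuousLinearEquiv v)
      ((φ.polyCharpoly (Module.finBasis ℝ E)).coeff j) := by
  rw [LinearEquiv.coe_toContinuousLinearEquiv', Module.Basis.equivFun_apply,
    polyCharpoly_coeff_eval]

theorem LinearMap.continuous_charpoly_coeff (φ : E →ₗ[ℝ] Module.End ℝ F) (j : ℕ) :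
    Continuous fun v => (φ v).charpoly.coeff j := by
  simp_rw [charpoly_coeff_eq_eval_polyCharpoly]
  exact MvPolynomial.continuous_eval _ |>.comp (ContinuousLinearEquiv.continuous _)

theorem LinearMap.dense_setOf_charpoly_coeff_ne_zero (φ : E →ₗ[ℝ] Module.End ℝ F) {j : ℕ}
    (h : ∃ x, (φ x).charpoly.coeff j ≠ 0) : Dense {v | (φ v).charpoly.coeff j ≠ 0} := by
  simp_rw [charpoly_coeff_eq_eval_polyCharpoly] at h ⊢
  obtain ⟨x, hx⟩ := h
  have hP : (φ.polyCharpoly (Module.finBasis ℝ E)).coeff j ≠ 0 := by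
    rintro hP
    simp [hP] at hx
  exact (MvPolynomial.dense_setOf_eval_ne_zero hP).preimage
    (Module.finBasis ℝ E).equivFun.toContinuousLinearEquiv.toHomeomorph.isOpenMap

end CharpolyCoeff

theorem LieAlgebra.charpoly_ad_lieEquiv {R L : Type*} [CommRing R] [LieRing L] [LieAlgebra R L]
    [Module.Free R L] [Module.Finite R L] (e : L ≃ₗ⁅R⁆ L) (x : L) :
    (ad R L (e x)).charpoly = (ad R L x).charpoly := by
  rw [← conj_ad_apply, LinearEquiv.charpoly_conj]

theorem LieAlgebra.charpoly_ad_apply_of_map_lie {R L G : Type*} [CommRing R] [LieRing L]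
    [LieAlgebra R L] [Module.Free R L] [Module.Finite R L] [Group G] (ρ : G →* Module.End R L)
    (hρ : ∀ a x y, ρ a ⁅x, y⁆ = ⁅ρ a x, ρ a y⁆) (a : G) (x : L) :
    (ad R L (ρ a x)).charpoly = (ad R L x).charpoly :=
  charpoly_ad_lieEquiv
    { LinearMap.GeneralLinearGroup.generalLinearEquiv R L (ρ.toHomUnits a) with
      map_lie' := hρ a _ _ } x

theorem LieAlgebra.exists_ne_zero_forall_lie_eq_zero (K L : Type*) [Field K] [LieRing L]
    [LieAlgebra K L] [IsSolvable L] [Nontrivial L] :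
    ∃ ℓ : L →ₗ[K] K, ℓ ≠ 0 ∧ ∀ x y : L, ℓ ⁅x, y⁆ = 0 := by
  obtain ⟨ℓ, hℓ, hle⟩ := Submodule.exists_le_ker_of_lt_top _ (derivedSeries_lt_top_of_solvable K L)
  exact ⟨ℓ, hℓ, fun x y =>
    hle (LieSubmodule.lie_mem_lie (LieSubmodule.mem_top x) (LieSubmodule.mem_top y))⟩

theorem MonoidHom.apply_eq_of_mem_closure {R G E α : Type*} [Semiring R] [Group G]
    [AddCommMonoid E] [Module R E] (ρ : G →* Module.End R E) (f : E → α) {S : Set G}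
    (hf : ∀ a ∈ S, ∀ v, f (ρ a v) = f v) {a : G} (ha : a ∈ Subgroup.closure S) (v : E) :
    f (ρ a v) = f v := by
  induction ha using Subgroup.closure_induction generalizing v with
  | mem a ha => exact hf a ha v
  | one => simp
  | mul a b _ _ iha ihb => simp [iha, ihb]
  | inv a _ iha => rw [← iha (ρ a⁻¹ v)]; simp

theorem ContinuousLinearMap.hasDerivAt_comp_of_tendsto_slope {E : Type*} [AddCommGroup E]
    [Module ℝ E] [TopologicalSpace E] (ℓ : E →L[ℝ] ℝ) {c : ℝ → E} {c' : E} {t : ℝ}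
    (hc : Tendsto (fun s => (s - t)⁻¹ • (c s - c t)) (𝓝[≠] t) (𝓝 c')) :
    HasDerivAt (fun s => ℓ (c s)) (ℓ c') t := by
  rw [hasDerivAt_iff_tendsto_slope]
  convert (ℓ.continuous.tendsto c').comp hc using 1
  ext s
  simp [slope_def_field, div_eq_inv_mul]

theorem apply_adjoint_eq_of_forall_lie_eq_zero {g : Type*} [LieRing g] [LieAlgebra ℝ g]
    [FiniteDimensional ℝ g] [TopologicalSpace g] [IsTopologicalAddGroup g] [ContinuousSMul ℝ g]
    [T2Space g] {G : Type*} [Group G] (Ad : G →* Module.End ℝ g) (exp : g → G)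
    (hexp0 : exp 0 = 1) (hgen : Subgroup.closure (Set.range exp) = ⊤)
    (hbracket : ∀ (a : G) (x y : g), Ad a ⁅x, y⁆ = ⁅Ad a x, Ad a y⁆)
    (hderiv : ∀ (x v : g) (t : ℝ),
      Tendsto (fun s : ℝ => (s - t)⁻¹ • (Ad (exp (s • x)) v - Ad (exp (t • x)) v))
        (𝓝[≠] t) (𝓝 (Ad (exp (t • x)) ⁅x, v⁆)))
    {ℓ : g →ₗ[ℝ] ℝ} (hℓ : ∀ x y : g, ℓ ⁅x, y⁆ = 0) (a : G) (v : g) : ℓ (Ad a v) = ℓ v := by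
  refine Ad.apply_eq_of_mem_closure ℓ ?_ (hgen ▸ Subgroup.mem_top a) v
  rintro _ ⟨x, rfl⟩ v
  have hconst (t : ℝ) : HasDerivAt (fun s : ℝ => ℓ (Ad (exp (s • x)) v)) 0 t := by
    simpa [hbracket, hℓ] using
      (LinearMap.toContinuousLinearMap ℓ).hasDerivAt_comp_of_tendsto_slope (hderiv x v t)
  simpa [hexp0] using is_const_of_deriv_eq_zero (fun t => (hconst t).differentiableAt)
    (fun t => (hconst t).deriv) 1 0

theorem exists_open_dense_adjoint_orbits_away_from_zero
    {g : Type*} [LieRing g] [LieAlgebra ℝ g] [FiniteDimensional ℝ g] [Nontrivial g]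
    [TopologicalSpace g] [IsTopologicalAddGroup g] [ContinuousSMul ℝ g] [T2Space g]
    {G : Type*} [Group G]
    (Ad : G →* Module.End ℝ g) (exp : g → G)
    (hexp0 : exp 0 = 1)
    (hgen : Subgroup.closure (Set.range exp) = ⊤)
    (hbracket : ∀ (a : G) (x y : g), Ad a ⁅x, y⁆ = ⁅Ad a x, Ad a y⁆)
    (hderiv : ∀ (x v : g) (t : ℝ),
      Filter.Tendsto
        (fun s : ℝ => (s - t)⁻¹ • (Ad (exp (s • x)) v - Ad (exp (t • x)) v))
        (𝓝[≠] t) (𝓝 (Ad (exp (t • x)) ⁅x, v⁆))) :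
    ∃ U : Set g, IsOpen U ∧ Dense U ∧
      ∀ v ∈ U, (0 : g) ∉ closure {w : g | ∃ a : G, Ad a v = w} := by
  obtain ⟨f, hf_cont, hf_inv, hf_zero, hf_dense⟩ : ∃ f : g → ℝ, Continuous f ∧
      (∀ a v, f (Ad a v) = f v) ∧ f 0 = 0 ∧ Dense {v | f v ≠ 0} := by
    by_cases hnil : ∀ x : g, IsNilpotent (LieAlgebra.ad ℝ g x)
    · have : LieRing.IsNilpotent g := LieAlgebra.isNilpotent_iff_forall.mpr hnil
      obtain ⟨ℓ, hℓ_ne, hℓ⟩ := LieAlgebra.exists_ne_zero_forall_lie_eq_zero ℝ g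
      exact ⟨ℓ, ℓ.continuous_of_finiteDimensional,
        apply_adjoint_eq_of_forall_lie_eq_zero Ad exp hexp0 hgen hbracket hderiv hℓ,
        map_zero ℓ, LinearMap.dense_setOf_ne_zero hℓ_ne⟩
    · obtain ⟨x, hx⟩ := not_forall.mp hnil
      obtain ⟨j, hj, hxj⟩ := LinearMap.exists_charpoly_coeff_ne_zero_of_not_isNilpotent hx
      refine ⟨fun v => (LieAlgebra.ad ℝ g v).charpoly.coeff j,
        LinearMap.continuous_charpoly_coeff _ j,
        fun a v => congrArg (·.coeff j)
          (LieAlgebra.charpoly_ad_apply_of_map_lie Ad hbracket a v), ?_,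
        LinearMap.dense_setOf_charpoly_coeff_ne_zero _ ⟨x, hxj⟩⟩
      simp [LinearMap.charpoly_zero, coeff_X_pow, hj.ne]
  refine ⟨{v | f v ≠ 0}, isOpen_ne_fun hf_cont continuous_const, hf_dense, fun v hv h0 => hv ?_⟩
  have h_level : closure {w | ∃ a, Ad a v = w} ⊆ f ⁻¹' {f v} :=
    closure_minimal (by rintro _ ⟨a, rfl⟩; exact hf_inv a v)
      (isClosed_singleton.preimage hf_cont)
  simpa [hf_zero] using (h_level h0).symm
end

section
/- The sign function ε_{k,l,j}^{p,q} = (-1)^{(n+q)(n+p+l+j)+k(l+j+1)} satisfies the associativity compatibility: for all admissible indices k,l,m and cardinalities |K|,|L|,|M|, one has ε_{k,l,k+l-|K|}^{p,q} · ε_{k+l-|K|,m,k+l+m-|K|-|L|-|M|}^{p+q-n,r} · (-1)^{(k-|K|)|M|} · ε(L,M) · ε(L,K) = ε_{k,l+m-|M|,k+l+m-|M|-|K|-|L|}^{p,q+r-n} · ε_{l,m,l+m-|M|}^{q,r} · (-1)^{(n-q+l)|L|} · ε(K,L) · ε(L,M), whenever K,L,M are pairwise disjoint index sets with L ∩ K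 = L ∩ M = ∅, using ε(K,L)ε(L,K) = (-1)^{|K||L|}. -/
/-!
STATEMENT 14: The sign function
`ε_{k,l,j}^{p,q} = (-1)^{(n+q)(n+p+l+j)+k(l+j+1)}` satisfies the
associativity compatibility: for all indices `k,l,m` and index sets
`K,L,M` (of cardinalities `a,b,c`), pairwise disjoint with
`L ∩ K = L ∩ M = ∅`,
`ε_{k,l,k+l-a}^{p,q} · ε_{k+l-a,m,k+l+m-a-b-c}^{p+q-n,r} · (-1)^{(k-a)c} · ε(L,M) · ε(L,K)
 = ε_{k,l+m-c,k+l+m-c-a-b}^{p,q+r-n} · ε_{l,m,l+m-c}^{q,r} · (-1)^{(n-q+l)b} · ε(K,L) · ε(L,M)`,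
using `ε(K,L)ε(L,K) = (-1)^{|K||L|}`.
-/

/-- The shuffle sign `ε(K,L)`, `0` if the sets intersect, otherwise the sign
of the shuffle permutation, computed as `(-1)^{#inversions}`. -/
def epsSign (K L : Finset ℕ) : ℤ :=
  if Disjoint K L then
    (-1 : ℤ) ^ ((K ×ˢ L).filter fun p => p.2 < p.1).card
  else 0

/-- The sign `ε_{k,l,j}^{p,q}` (`n` the ambient dimension). -/
def eps (n p q k l j : ℤ) : ℤ :=
  ((n + q) * (n + p + l + j) + k * (l + j + 1)).negOnePow

/-- The inversion counts of `(K,L)` and `(L,K)` sum to `|K|·|L|` for disjoint sets. -/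
lemma epsSign_card (K L : Finset ℕ) (h : Disjoint K L) :
    ((K ×ˢ L).filter fun p => p.2 < p.1).card
      + ((L ×ˢ K).filter fun p => p.2 < p.1).card = K.card * L.card := by
  classical
  have h1 : ((L ×ˢ K).filter fun p => p.2 < p.1).card
      = ((K ×ˢ L).filter fun p => p.1 < p.2).card := by
    apply Finset.card_bij' (fun p _ => p.swap) (fun p _ => p.swap) <;>
      simp [Finset.mem_filter, Finset.mem_product, and_assoc, and_comm, Prod.swap]
  have h2 : ((K ×ˢ L).filter fun p => p.1 < p.2)
      = ((K ×ˢ L).filter fun p => ¬ p.2 < p.1) := by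
    apply Finset.filter_congr
    intro p hp
    simp only [Finset.mem_product] at hp
    have : p.1 ≠ p.2 := fun he => (h.forall_ne_finset hp.1 hp.2) (he ▸ rfl)
    constructor
    · intro hlt hgt; omega
    · intro hn; omega
  rw [h1, h2, Finset.card_filter_add_card_filter_not, Finset.card_product]

/-- `ε(K,L)ε(L,K) = (-1)^{|K||L|}`. -/
lemma epsSign_mul_comm (K L : Finset ℕ) (h : Disjoint K L) :
    epsSign K L * epsSign L K = (((K.card : ℤ) * L.card).negOnePow : ℤ) := by
  rw [epsSign, epsSign, if_pos h, if_pos h.symm, ← pow_add, epsSign_card K L h]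
  rw [show ((K.card : ℤ) * L.card) = ((K.card * L.card : ℕ) : ℤ) by push_cast; ring,
    Int.coe_negOnePow_natCast]

lemma epsSign_sq (K L : Finset ℕ) (h : Disjoint K L) :
    epsSign K L * epsSign K L = 1 := by
  rw [epsSign, if_pos h, ← pow_add, ← two_mul, pow_mul]
  norm_num

lemma epsSign_ne_zero (K L : Finset ℕ) (h : Disjoint K L) : epsSign K L ≠ 0 := by
  rw [epsSign, if_pos h]
  exact pow_ne_zero _ (by norm_num)

/-- The purely arithmetic sign identity, at the level of `ℤˣ`. -/
lemma eps_sign_identity' (n p q r k l m a b c : ℤ) :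
    ((n + q) * (n + p + l + (k + l - a)) + k * (l + (k + l - a) + 1)).negOnePow *
    ((n + r) * (n + (p + q - n) + m + (k + l + m - a - b - c))
          + (k + l - a) * (m + (k + l + m - a - b - c) + 1)).negOnePow *
    ((k - a) * c).negOnePow * (a * b).negOnePow
    = ((n + (q + r - n)) * (n + p + (l + m - c) + (k + l + m - c - a - b))
          + k * ((l + m - c) + (k + l + m - c - a - b) + 1)).negOnePow *
      ((n + r) * (n + q + m + (l + m - c)) + l * (m + (l + m - c) + 1)).negOnePow *
      ((n - q + l) * b).negOnePow := by
  rw [← Int.negOnePow_add, ← Int.negOnePow_add, ← Int.negOnePow_add,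
    ← Int.negOnePow_add, ← Int.negOnePow_add, Int.negOnePow_eq_iff]
  have h1 : Even ((a - 1) * a) := by simpa using Int.even_mul_succ_self (a - 1)
  have h2 : Even (k * (k + 1)) := Int.even_mul_succ_self k
  have h3 : Even (2 * (a*b - m*a - l*b - l*a + k*c - k*a + k*l + r*c - r*m
      - r*l + q*c + q*b - q*m - n*b - n*a + n*l + n*k - n*r + n*p)) :=
    even_two_mul _
  have he : ((n + q) * (n + p + l + (k + l - a)) + k * (l + (k + l - a) + 1)
      + ((n + r) * (n + (p + q - n) + m + (k + l + m - a - b - c))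
        + (k + l - a) * (m + (k + l + m - a - b - c) + 1))
      + (k - a) * c + a * b)
      - ((n + (q + r - n)) * (n + p + (l + m - c) + (k + l + m - c - a - b))
        + k * ((l + m - c) + (k + l + m - c - a - b) + 1)
      + ((n + r) * (n + q + m + (l + m - c)) + l * (m + (l + m - c) + 1))
      + (n - q + l) * b)
      = (a - 1) * a + (k * (k + 1) + 2 * (a*b - m*a - l*b - l*a + k*c - k*a
        + k*l + r*c - r*m - r*l + q*c + q*b - q*m - n*b - n*a + n*l + n*k
        - n*r + n*p)) := by ring
  rw [he]
  exact h1.add (h2.add h3)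

/-- The arithmetic sign identity, in `ℤ`, phrased via `eps`. -/
lemma eps_sign_identity (n p q r k l m a b c : ℤ) :
    eps n p q k l (k + l - a) *
      eps n (p + q - n) r (k + l - a) m (k + l + m - a - b - c) *
      (((k - a) * c).negOnePow : ℤ) * ((a * b).negOnePow : ℤ)
    = eps n p (q + r - n) k (l + m - c) (k + l + m - c - a - b) *
      eps n q r l m (l + m - c) *
      (((n - q + l) * b).negOnePow : ℤ) := by
  have := congrArg (Units.val) (eps_sign_identity' n p q r k l m a b c)
  simp only [Units.val_mul] at this
  unfold eps
  exact this

theorem eps_associativity_compatibility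
    (n p q r k l m : ℤ) (K L M : Finset ℕ)
    (hKL : Disjoint K L) (hLM : Disjoint L M) (hKM : Disjoint K M) :
    eps n p q k l (k + l - K.card) *
      eps n (p + q - n) r (k + l - K.card) m
        (k + l + m - K.card - L.card - M.card) *
      (((k - K.card) * M.card : ℤ).negOnePow : ℤ) *
      epsSign L M * epsSign L K
    =
    eps n p (q + r - n) k (l + m - M.card)
        (k + l + m - M.card - K.card - L.card) *
      eps n q r l m (l + m - M.card) *
      (((n - q + l) * L.card : ℤ).negOnePow : ℤ) *
      epsSign K L * epsSign L M := by
  apply mul_right_cancel₀ (epsSign_ne_zero K L hKL)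
  have hmc := epsSign_mul_comm K L hKL
  have hsq := epsSign_sq K L hKL
  have key := eps_sign_identity n p q r k l m (K.card : ℤ) (L.card : ℤ) (M.card : ℤ)
  linear_combination (epsSign L M) * key
    + (eps n p q k l (k + l - K.card) *
        eps n (p + q - n) r (k + l - K.card) m
          (k + l + m - K.card - L.card - M.card) *
        (((k - K.card) * M.card : ℤ).negOnePow : ℤ) * epsSign L M) * hmc
    - (eps n p (q + r - n) k (l + m - M.card)
          (k + l + m - M.card - K.card - L.card) *
        eps n q r l m (l + m - M.card) *
        (((n - q + l) * L.card : ℤ).negOnePow : ℤ) * epsSign L M) * hsq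
end
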